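/- arXiv:1011.5666 — 5 statements merged into one kernel-verified Lean document; each statement's English description precedes it below -/
import Mathlib

section
/- Let K and T be convex bodies in ℝ^n. Then for every c ∈ ℝ^n with vol(K ∩ (T + c)) > 0, the covering number satisfies N(K,T) ≤ 6^n · vol(K) / vol(K ∩ (T + c)). -/
/-!
Put `S = K ∩ (c + T)`. By Fubini, the average over `x ∈ S` of `vol (S ∩ (2x - S))` is
`2⁻ⁿ vol S`: for fixed `w ∈ S` the points `x` with `2x - w ∈ S` form `(w + S) / 2`. So some
`C = (S - x) ∩ (x - S)` has `vol C ≥ 2⁻ⁿ vol S`, and `A = C / 2` is convex and symmetric, hence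
`A - A = C ⊆ T + (c - x)` and `vol A ≥ 4⁻ⁿ vol S`. A maximal family `Λ ⊆ K` of disjoint
translates of `A` lies in `K + A`, of volume at most `(3/2)ⁿ vol K` since `C ⊆ K - x`, while
maximality gives `K ⊆ Λ + (A - A)`. Thus `N(K, T) ≤ #Λ ≤ 4ⁿ (3/2)ⁿ vol K / vol S`.
-/

open MeasureTheory Pointwise
open scoped ENNReal

noncomputable section

abbrev Euc (n : ℕ) := EuclideanSpace ℝ (Fin n)

/-- A convex body: a compact convex set with nonempty interior. -/
def IsConvexBody {n : ℕ} (K : Set (Euc n)) : Prop :=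
  Convex ℝ K ∧ IsCompact K ∧ (interior K).Nonempty

/-- The covering number `N(K,T)`: the least cardinality of a finite set `Λ`
with `K ⊆ Λ + T`.  It is `⊤` if no finite cover exists. -/
def coveringNumber {n : ℕ} (K T : Set (Euc n)) : ℕ∞ :=
  sInf {m : ℕ∞ | ∃ Λ : Finset (Euc n), (Λ.card : ℕ∞) = m ∧ K ⊆ ↑Λ + T}

open Set

section Packing

variable {G : Type*} [AddGroup G] [MeasurableSpace G] [MeasurableAdd G]
  {μ : Measure G} [μ.IsAddLeftInvariant] {K A : Set G}

theorem card_mul_measure_le_of_pairwiseDisjoint_vadd {Λ : Finset G} (hA : MeasurableSet A)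
    (hΛK : ↑Λ ⊆ K) (hΛ : (Λ : Set G).PairwiseDisjoint (· +ᵥ A)) :
    Λ.card * μ A ≤ μ (K + A) := calc
  Λ.card * μ A = ∑ g ∈ Λ, μ (g +ᵥ A) := by simp [measure_vadd]
  _ = μ (⋃ g ∈ Λ, g +ᵥ A) := (measure_biUnion_finset hΛ fun g _ => hA.const_vadd g).symm
  _ ≤ μ (K + A) := measure_mono <| iUnion₂_subset fun _ hg => vadd_set_subset_add (hΛK hg)

theorem exists_maximal_pairwiseDisjoint_vadd (hA : MeasurableSet A) (hA₀ : μ A ≠ 0)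
    (hKA : μ (K + A) ≠ ∞) :
    ∃ Λ : Finset G, ↑Λ ⊆ K ∧ (Λ : Set G).PairwiseDisjoint (· +ᵥ A) ∧
      ∀ y ∈ K, ∃ g ∈ Λ, ¬Disjoint (y +ᵥ A) (g +ᵥ A) := by
  classical
  set packingCards : Set ℕ :=
    {m | ∃ Λ : Finset G, (↑Λ ⊆ K ∧ (Λ : Set G).PairwiseDisjoint (· +ᵥ A)) ∧ Λ.card = m}
  have hbdd : BddAbove packingCards := by
    obtain ⟨N, hN⟩ := ENNReal.exists_nat_gt (ENNReal.div_lt_top hKA hA₀).ne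
    refine ⟨N, ?_⟩
    rintro _ ⟨Λ, ⟨hΛK, hΛ⟩, rfl⟩
    have := (ENNReal.le_div_iff_mul_le (.inl hA₀) (.inr hKA)).2
      (card_mul_measure_le_of_pairwiseDisjoint_vadd hA hΛK hΛ)
    exact_mod_cast (this.trans_lt hN).le
  obtain ⟨Λ, ⟨hΛK, hΛ⟩, hcard⟩ :=
    Nat.sSup_mem (⟨0, ∅, by simp⟩ : packingCards.Nonempty) hbdd
  refine ⟨Λ, hΛK, hΛ, fun y hy => ?_⟩
  by_contra! hdisj
  have hyΛ : y ∉ Λ := fun hyΛ => by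
    simpa [(nonempty_of_measure_ne_zero hA₀).ne_empty] using hdisj y hyΛ
  have hmem : (insert y Λ).card ∈ packingCards :=
    ⟨insert y Λ, ⟨by simpa using insert_subset hy hΛK,
      by simpa using hΛ.insert fun g hg _ => hdisj g hg⟩, rfl⟩
  have := le_csSup hbdd hmem
  rw [Finset.card_insert_of_notMem hyΛ, hcard] at this
  omega

theorem exists_finset_subset_add_sub (hA : MeasurableSet A) (hA₀ : μ A ≠ 0)
    (hKA : μ (K + A) ≠ ∞) :
    ∃ Λ : Finset G, K ⊆ ↑Λ + (A - A) ∧ Λ.card * μ A ≤ μ (K + A) := by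
  obtain ⟨Λ, hΛK, hΛ, hmax⟩ := exists_maximal_pairwiseDisjoint_vadd hA hA₀ hKA
  refine ⟨Λ, fun y hy => ?_, card_mul_measure_le_of_pairwiseDisjoint_vadd hA hΛK hΛ⟩
  obtain ⟨g, hg, hmeet⟩ := hmax y hy
  obtain ⟨_, ⟨a, ha, rfl⟩, b, hb, hba⟩ := not_disjoint_iff.1 hmeet
  refine ⟨g, hg, b - a, sub_mem_sub hb ha, ?_⟩
  show g + (b - a) = y
  rw [← add_sub_assoc, show g + b = y + a from hba, add_sub_cancel_right]

end Packing

section Convex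

variable {E : Type*} [AddCommGroup E]

/-- `(S - x) ∩ (x - S)`, the largest subset of `S - x` that is symmetric about `0`. -/
def symmPart (S : Set E) (x : E) : Set E := (-x +ᵥ S) ∩ -(-x +ᵥ S)

theorem mem_symmPart {S : Set E} {x z : E} : z ∈ symmPart S x ↔ x + z ∈ S ∧ x - z ∈ S := by
  simp [symmPart, mem_vadd_set_iff_neg_vadd_mem, sub_eq_add_neg]

theorem neg_symmPart (S : Set E) (x : E) : -symmPart S x = symmPart S x := by
  rw [symmPart, inter_neg, neg_neg, inter_comm]

variable [Module ℝ E]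

theorem convex_symmPart {S : Set E} (hS : Convex ℝ S) (x : E) : Convex ℝ (symmPart S x) :=
  (hS.vadd _).inter (hS.vadd _).neg

theorem Convex.sub_self_eq_two_smul {A : Set E} (hA : Convex ℝ A) (hA' : -A = A) :
    A - A = (2 : ℝ) • A := by
  rw [sub_eq_add_neg, hA', ← one_add_one_eq_two, hA.add_smul zero_le_one zero_le_one, one_smul]

theorem Convex.mem_of_two_smul_sub_mem {S : Set E} (hS : Convex ℝ S) {x w : E} (hw : w ∈ S)
    (h : (2 : ℝ) • x - w ∈ S) : x ∈ S := by
  convert hS hw h (by norm_num : (0 : ℝ) ≤ 2⁻¹) (by norm_num : (0 : ℝ) ≤ 2⁻¹) (by norm_num) using 1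
  module

end Convex

theorem Finset.coe_vadd_finset_add {E : Type*} [AddCommGroup E] [DecidableEq E] (y : E)
    (Λ : Finset E) (T : Set E) : ↑(y +ᵥ Λ) + T = ↑Λ + (y +ᵥ T) := by
  rw [Finset.coe_vadd_finset, vadd_add_assoc, add_vadd_comm]

section AddHaar

open Module

variable {E : Type*} [NormedAddCommGroup E] [NormedSpace ℝ E] [MeasurableSpace E] [BorelSpace E]
  [FiniteDimensional ℝ E] (μ : Measure E) [μ.IsAddHaarMeasure]

theorem addHaar_ofNat_smul (m : ℕ) [m.AtLeastTwo] (s : Set E) :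
    μ ((ofNat(m) : ℝ) • s) = ofNat(m) ^ finrank ℝ E * μ s := by
  rw [Measure.addHaar_smul_of_nonneg μ (Nat.ofNat_nonneg _),
    ENNReal.ofReal_pow (Nat.ofNat_nonneg _), ENNReal.ofReal_ofNat]

theorem two_pow_mul_addHaar_setOf_two_smul_sub_mem (S : Set E) (w : E) :
    2 ^ finrank ℝ E * μ {x | (2 : ℝ) • x - w ∈ S} = μ S := by
  have h : (2 : ℝ) • {x | (2 : ℝ) • x - w ∈ S} = w +ᵥ S := by
    ext y
    rw [mem_smul_set_iff_inv_smul_mem₀ two_ne_zero, mem_ofPred_eq, smul_inv_smul₀ two_ne_zero,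
      mem_vadd_set_iff_neg_vadd_mem, vadd_eq_add, neg_add_eq_sub]
  rw [← measure_vadd μ w S, ← h, addHaar_ofNat_smul]

theorem two_pow_mul_lintegral_addHaar_symmPart {S : Set E} (hS : MeasurableSet S) :
    2 ^ finrank ℝ E * ∫⁻ x, μ (symmPart S x) ∂μ = μ S * μ S := by
  set F : Set (E × E) := {p | p.2 ∈ S ∧ (2 : ℝ) • p.1 - p.2 ∈ S}
  have hF : MeasurableSet F :=
    (measurable_snd hS).inter (((measurable_fst.const_smul 2).sub measurable_snd) hS)
  have hsection_fst (x : E) : Prod.mk x ⁻¹' F = x +ᵥ symmPart S x := by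
    ext w
    rw [mem_vadd_set_iff_neg_vadd_mem, mem_symmPart, vadd_eq_add, add_neg_cancel_left,
      show x - (-x + w) = (2 : ℝ) • x - w by module]
    rfl
  have hsection_snd (w : E) :
      2 ^ finrank ℝ E * μ ((·, w) ⁻¹' F) = S.indicator (fun _ => μ S) w := by
    by_cases hw : w ∈ S
    · simp [F, hw, two_pow_mul_addHaar_setOf_two_smul_sub_mem]
    · simp [F, hw]
  calc 2 ^ finrank ℝ E * ∫⁻ x, μ (symmPart S x) ∂μ
      = 2 ^ finrank ℝ E * μ.prod μ F := by
        simp_rw [Measure.prod_apply hF, hsection_fst, measure_vadd]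
    _ = ∫⁻ w, 2 ^ finrank ℝ E * μ ((·, w) ⁻¹' F) ∂μ := by
        rw [Measure.prod_apply_symm hF, lintegral_const_mul' _ _ (by simp)]
    _ = μ S * μ S := by
        simp_rw [hsection_snd]
        rw [lintegral_indicator hS, setLIntegral_const]

theorem Convex.exists_le_two_pow_mul_addHaar_symmPart {S : Set E} (hS : Convex ℝ S)
    (hSm : MeasurableSet S) (hS₀ : μ S ≠ 0) (hS_top : μ S ≠ ∞) :
    ∃ x, μ S ≤ 2 ^ finrank ℝ E * μ (symmPart S x) := by
  set f : E → ℝ≥0∞ := fun x => 2 ^ finrank ℝ E * μ (symmPart S x)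
  have hsupp : Function.support f ⊆ S := by
    intro x hx
    obtain ⟨z, hz⟩ := nonempty_of_measure_ne_zero (right_ne_zero_of_mul hx)
    rw [mem_symmPart] at hz
    exact hS.mem_of_two_smul_sub_mem hz.1 (by convert hz.2 using 1; module)
  have hint : ∫⁻ x in S, f x ∂μ = μ S * μ S := by
    rw [setLIntegral_eq_of_support_subset hsupp, lintegral_const_mul' _ _ (by simp),
      two_pow_mul_lintegral_addHaar_symmPart μ hSm]
  obtain ⟨x, hx⟩ := exists_laverage_le (μ := μ.restrict S)
    (by rwa [Ne, Measure.restrict_eq_zero]) (by rw [hint]; exact ENNReal.mul_ne_top hS_top hS_top)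
  refine ⟨x, ?_⟩
  rwa [setLAverage_eq, hint, ENNReal.mul_div_cancel_right hS₀ hS_top] at hx

theorem Convex.two_pow_mul_addHaar_add_inv_two_smul_le {K C : Set E} (hK : Convex ℝ K) {y : E}
    (hC : C ⊆ y +ᵥ K) :
    2 ^ finrank ℝ E * μ (K + (2⁻¹ : ℝ) • C) ≤ 3 ^ finrank ℝ E * μ K := by
  have h : (2 : ℝ) • (K + (2⁻¹ : ℝ) • C) ⊆ y +ᵥ (3 : ℝ) • K := by
    rw [smul_add, smul_inv_smul₀ two_ne_zero, show (3 : ℝ) = 2 + 1 by norm_num,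
      hK.add_smul (by norm_num) (by norm_num), one_smul, ← add_vadd_comm]
    exact add_subset_add_left hC
  calc 2 ^ finrank ℝ E * μ (K + (2⁻¹ : ℝ) • C) = μ ((2 : ℝ) • (K + (2⁻¹ : ℝ) • C)) := by
        rw [addHaar_ofNat_smul]
    _ ≤ μ (y +ᵥ (3 : ℝ) • K) := measure_mono h
    _ = 3 ^ finrank ℝ E * μ K := by
        rw [measure_vadd, addHaar_ofNat_smul]

theorem exists_finset_subset_add_card_mul_le {K S T : Set E} (hK : Convex ℝ K)
    (hK_top : μ K ≠ ∞) (hS : Convex ℝ S) (hSm : MeasurableSet S) (hS₀ : μ S ≠ 0) (hSK : S ⊆ K)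
    (hST : S ⊆ T) :
    ∃ Λ : Finset E, K ⊆ ↑Λ + T ∧ Λ.card * μ S ≤ 6 ^ finrank ℝ E * μ K := by
  classical
  obtain ⟨x, hx⟩ := hS.exists_le_two_pow_mul_addHaar_symmPart μ hSm hS₀
    (ne_top_of_le_ne_top hK_top (measure_mono hSK))
  set d := finrank ℝ E
  set C := symmPart S x
  set A := (2⁻¹ : ℝ) • C
  have hC_eq : (2 : ℝ) • A = C := smul_inv_smul₀ two_ne_zero C
  have hCm : MeasurableSet C := (hSm.const_vadd _).inter (hSm.const_vadd _).neg
  have hAm : MeasurableSet A := hCm.const_smul_of_ne_zero (by norm_num)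
  have hA_sub : A - A = C := by
    rw [((convex_symmPart hS x).smul _).sub_self_eq_two_smul
      (by rw [← smul_set_neg, neg_symmPart]), hC_eq]
  have hS_le : μ S ≤ 2 ^ d * (2 ^ d * μ A) := by rwa [← addHaar_ofNat_smul, hC_eq]
  have hKA : 2 ^ d * μ (K + A) ≤ 3 ^ d * μ K :=
    hK.two_pow_mul_addHaar_add_inv_two_smul_le μ <|
      inter_subset_left.trans (vadd_set_mono hSK)
  have hA₀ : μ A ≠ 0 := fun h => hS₀ (by simpa [h] using hS_le)
  have hKA_top : μ (K + A) ≠ ∞ := fun h => by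
    simpa [h] using hKA.trans_lt (ENNReal.mul_lt_top (by simp) hK_top.lt_top)
  obtain ⟨Λ, hcover, hcard⟩ := exists_finset_subset_add_sub hAm hA₀ hKA_top
  refine ⟨-x +ᵥ Λ, ?_, ?_⟩
  · rw [Finset.coe_vadd_finset_add]
    exact hcover.trans <|
      add_subset_add_left (hA_sub ▸ inter_subset_left.trans (vadd_set_mono hST))
  · rw [Finset.card_vadd_finset]
    calc Λ.card * μ S ≤ Λ.card * (2 ^ d * (2 ^ d * μ A)) := by gcongr
      _ = 2 ^ d * (2 ^ d * (Λ.card * μ A)) := by ring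
      _ ≤ 2 ^ d * (2 ^ d * μ (K + A)) := by gcongr
      _ ≤ 2 ^ d * (3 ^ d * μ K) := by gcongr
      _ = 6 ^ d * μ K := by rw [← mul_assoc, ← mul_pow]; norm_num

end AddHaar

theorem coveringNumber_le_card {n : ℕ} {K T : Set (Euc n)} {Λ : Finset (Euc n)}
    (h : K ⊆ ↑Λ + T) : coveringNumber K T ≤ Λ.card :=
  sInf_le ⟨Λ, rfl, h⟩

theorem covering_number_le_of_intersection_volume
    {n : ℕ} (K T : Set (Euc n)) (hK : IsConvexBody K) (hT : IsConvexBody T)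
    (c : Euc n) (hpos : 0 < volume (K ∩ (c +ᵥ T))) :
    (coveringNumber K T : ℝ≥0∞) ≤ 6 ^ n * volume K / volume (K ∩ (c +ᵥ T)) := by
  classical
  obtain ⟨hK_conv, hK_cpt, -⟩ := hK
  obtain ⟨hT_conv, hT_cpt, -⟩ := hT
  obtain ⟨Λ, hcover, hcard⟩ := exists_finset_subset_add_card_mul_le volume hK_conv
    hK_cpt.measure_lt_top.ne (hK_conv.inter (hT_conv.vadd c))
    (hK_cpt.isClosed.measurableSet.inter (hT_cpt.isClosed.measurableSet.const_vadd c)) hpos.ne'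
    inter_subset_left inter_subset_right
  rw [finrank_euclideanSpace_fin] at hcard
  calc (coveringNumber K T : ℝ≥0∞) ≤ (c +ᵥ Λ).card := by
        exact_mod_cast coveringNumber_le_card (by rwa [Finset.coe_vadd_finset_add])
    _ = Λ.card := by rw [Finset.card_vadd_finset]
    _ ≤ 6 ^ n * volume K / volume (K ∩ (c +ᵥ T)) :=
        (ENNReal.le_div_iff_mul_le (.inl hpos.ne') (.inl <|
          ne_top_of_le_ne_top hK_cpt.measure_lt_top.ne (measure_mono inter_subset_left))).2 hcard

end
end

section
/- Let K ⊆ ℝ^n be a convex body, ε > 0, and s ∈ ℝ^n such that sup_{x ∈ K} ⟨s,x⟩ ≤ εn and |⟨s, b(K)⟩| ≤ ε, where b(K) is the centroid of K. Then L_{f_s}^{2n} ≤ (e^{2(n+1)ε} / vol(K)²) · det(cov(f_s)). -/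
open MeasureTheory Pointwise
open scoped ENNReal RealInnerProductSpace

noncomputable section

/-- The centroid (barycenter) of a set `K`. -/
def centroid {n : ℕ} (K : Set (Euc n)) : Euc n :=
  (volume K).toReal⁻¹ • ∫ x in K, x

/-- The exponential reweighting `f_s` of the uniform density on `K`:
`f_s(x) = exp ⟨s,x⟩` on `K` and `0` elsewhere. -/
def expWeight {n : ℕ} (K : Set (Euc n)) (s : Euc n) (x : Euc n) : ℝ :=
  Set.indicator K (fun y => Real.exp ⟪s, y⟫) x

/-- The centroid (barycenter) of a density `f`. -/
def funCentroid {n : ℕ} (f : Euc n → ℝ) : Euc n :=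
  (∫ x, f x)⁻¹ • ∫ x, f x • x

/-- The covariance matrix of a density `f`. -/
def funCov {n : ℕ} (f : Euc n → ℝ) : Matrix (Fin n) (Fin n) ℝ :=
  Matrix.of ((∫ x, f x)⁻¹ •
    ∫ x, fun i j => f x * ((x i - funCentroid f i) * (x j - funCentroid f j)))

/-- The inertial ellipsoid of a density `f`. -/
def funEllipsoid {n : ℕ} (f : Euc n → ℝ) : Set (Euc n) :=
  {x | ∑ i, ∑ j, x i * (funCov f)⁻¹ i j * x j ≤ 1}

/-- The isotropic constant of a density `f` in dimension `n`. -/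
def isotropicConstant {n : ℕ} (f : Euc n → ℝ) : ℝ :=
  ((⨆ x, f x) / ∫ x, f x) ^ ((n : ℝ)⁻¹) * (funCov f).det ^ ((2 * (n : ℝ))⁻¹)

/-! On `K` the weight `exp ⟪s, x⟫` is at most `exp (ε n)`, while Jensen's inequality bounds its
integral below by `vol K · exp ⟪s, b(K)⟫ ≥ vol K · exp (-ε)`. Hence
`sup f_s / ∫ f_s ≤ exp ((n + 1) ε) / vol K`, and `L_{f_s}^{2n}` is the square of this ratio times
`det cov(f_s)`, which is nonnegative because a covariance matrix is positive semidefinite. -/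

lemma expWeight_nonneg {n : ℕ} (K : Set (Euc n)) (s x : Euc n) : 0 ≤ expWeight K s x :=
  Set.indicator_nonneg (fun _ _ => (Real.exp_pos _).le) x

lemma iSup_expWeight_le {n : ℕ} {K : Set (Euc n)} {s : Euc n} {c : ℝ}
    (hc : ∀ x ∈ K, ⟪s, x⟫ ≤ c) : ⨆ x, expWeight K s x ≤ Real.exp c := by
  refine ciSup_le fun x => ?_
  by_cases hx : x ∈ K
  · simpa [expWeight, hx] using hc x hx
  · simpa [expWeight, hx] using (Real.exp_pos c).le

lemma integral_expWeight {n : ℕ} {K : Set (Euc n)} (hK : MeasurableSet K) (s : Euc n) :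
    ∫ x, expWeight K s x = ∫ x in K, Real.exp ⟪s, x⟫ :=
  integral_indicator hK

lemma inner_centroid {n : ℕ} {K : Set (Euc n)} (hK : IsCompact K) (s : Euc n) :
    ⟪s, centroid K⟫ = ⨍ x in K, ⟪s, x⟫ := by
  rw [setAverage_eq, centroid, real_inner_smul_right, smul_eq_mul, measureReal_def]
  congr 1
  exact ((innerSL ℝ s).integral_comp_comm (continuous_id.continuousOn.integrableOn_compact hK)).symm

lemma volume_mul_exp_inner_centroid_le_integral_expWeight {n : ℕ} {K : Set (Euc n)}
    (hK : IsCompact K) (s : Euc n) :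
    (volume K).toReal * Real.exp ⟪s, centroid K⟫ ≤ ∫ x, expWeight K s x := by
  rcases eq_or_ne (volume K) 0 with hK0 | hK0
  · simpa [hK0] using integral_nonneg (expWeight_nonneg K s)
  have hinner : Continuous fun x : Euc n => ⟪s, x⟫ := continuous_const.inner continuous_id
  have hjensen := convexOn_exp.map_set_average_le Real.continuous_exp.continuousOn isClosed_univ
    hK0 hK.measure_lt_top.ne (by simp) (hinner.continuousOn.integrableOn_compact hK)
    ((Real.continuous_exp.comp hinner).continuousOn.integrableOn_compact hK)
  rw [← inner_centroid hK, setAverage_eq, smul_eq_mul, measureReal_def] at hjensen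
  rw [integral_expWeight hK.isClosed.measurableSet]
  have hvol : 0 < (volume K).toReal := ENNReal.toReal_pos hK0 hK.measure_lt_top.ne
  calc (volume K).toReal * Real.exp ⟪s, centroid K⟫
      ≤ (volume K).toReal * ((volume K).toReal⁻¹ * ∫ x in K, Real.exp ⟪s, x⟫) := by gcongr
    _ = ∫ x in K, Real.exp ⟪s, x⟫ := by field_simp

lemma funCov_posSemidef {n : ℕ} {f : Euc n → ℝ} (hf : ∀ x, 0 ≤ f x) : (funCov f).PosSemidef := by
  set b := funCentroid f
  obtain ⟨G, hG_def⟩ : ∃ G : Euc n → Fin n → Fin n → ℝ,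
      G = fun x i j => f x * ((x i - b i) * (x j - b j)) := ⟨_, rfl⟩
  have hcov_eq : funCov f = Matrix.of ((∫ x, f x)⁻¹ • ∫ x, G x) := by rw [hG_def]; rfl
  by_cases hG : Integrable G
  swap
  · -- the Bochner integral of a non-integrable function is `0`, so `funCov f = 0`
    rw [hcov_eq, integral_undef hG, smul_zero]
    exact .zero
  have hGij : ∀ i j, Integrable fun x => G x i j := fun i j => hG.eval i |>.eval j
  have hcov : ∀ i j, funCov f i j = (∫ x, f x)⁻¹ * ∫ x, G x i j := fun i j => by
    rw [hcov_eq, Matrix.of_apply, Pi.smul_apply, Pi.smul_apply, smul_eq_mul,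
      eval_integral (fun i => hG.eval i), eval_integral (hGij i)]
  refine .of_dotProduct_mulVec_nonneg ?_ fun v => ?_
  · ext i j
    simp only [Matrix.conjTranspose_apply, star_trivial, hcov, hG_def, mul_comm (_ - b j)]
  have hquad : dotProduct (star v) ((funCov f).mulVec v)
      = (∫ x, f x)⁻¹ * ∫ x, f x * (∑ i, v i * (x i - b i)) ^ 2 := by
    calc dotProduct (star v) ((funCov f).mulVec v)
        = ∑ i, ∑ j, (∫ x, f x)⁻¹ * ∫ x, v i * G x i j * v j := by
          simp only [dotProduct, Matrix.mulVec, star_trivial, hcov, Finset.mul_sum,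
            integral_mul_const, integral_const_mul]
          exact Finset.sum_congr rfl fun i _ => Finset.sum_congr rfl fun j _ => by ring
      _ = (∫ x, f x)⁻¹ * ∫ x, ∑ i, ∑ j, v i * G x i j * v j := by
          rw [integral_finsetSum _ fun i _ => integrable_finsetSum _ fun j _ =>
            ((hGij i j).const_mul _).mul_const _, Finset.mul_sum]
          refine Finset.sum_congr rfl fun i _ => ?_
          rw [integral_finsetSum _ fun j _ => ((hGij i j).const_mul _).mul_const _, Finset.mul_sum]
      _ = (∫ x, f x)⁻¹ * ∫ x, f x * (∑ i, v i * (x i - b i)) ^ 2 := by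
          congr 2 with x
          rw [sq, Finset.sum_mul_sum, Finset.mul_sum]
          refine Finset.sum_congr rfl fun i _ => ?_
          rw [Finset.mul_sum]
          refine Finset.sum_congr rfl fun j _ => ?_
          rw [hG_def]
          ring
  rw [hquad]
  exact mul_nonneg (inv_nonneg.2 (integral_nonneg hf))
    (integral_nonneg fun x => mul_nonneg (hf x) (sq_nonneg _))

lemma iSup_div_integral_nonneg {α : Type*} [MeasurableSpace α] {μ : Measure α} {f : α → ℝ}
    (hf : ∀ x, 0 ≤ f x) : 0 ≤ (⨆ x, f x) / ∫ x, f x ∂μ :=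
  div_nonneg (Real.iSup_nonneg hf) (integral_nonneg hf)

lemma isotropicConstant_pow_two_mul {n : ℕ} (hn : n ≠ 0) {f : Euc n → ℝ} (hf : ∀ x, 0 ≤ f x) :
    isotropicConstant f ^ (2 * n) = ((⨆ x, f x) / ∫ x, f x) ^ 2 * (funCov f).det := by
  have h2n : 2 * (n : ℝ) = ((2 * n : ℕ) : ℝ) := by push_cast; rfl
  rw [isotropicConstant, mul_pow, h2n, Real.rpow_inv_natCast_pow (funCov_posSemidef hf).det_nonneg
    (by omega), mul_comm 2 n, pow_mul, Real.rpow_inv_natCast_pow (iSup_div_integral_nonneg hf) hn]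

lemma volume_toReal_le_one_of_dim_zero (K : Set (Euc 0)) : (volume K).toReal ≤ 1 := by
  rw [← measureReal_def, volume_euclideanSpace_eq_dirac]
  exact measureReal_le_one

lemma IsConvexBody.volume_toReal_pos {n : ℕ} {K : Set (Euc n)} (hK : IsConvexBody K) :
    0 < (volume K).toReal :=
  ENNReal.toReal_pos (Measure.measure_pos_of_nonempty_interior _ hK.2.2).ne'
    hK.2.1.measure_lt_top.ne

lemma iSup_div_integral_expWeight_le {n : ℕ} {K : Set (Euc n)} (hK : IsCompact K)
    (hvol : 0 < (volume K).toReal) {s : Euc n} {c : ℝ} (hc : ∀ x ∈ K, ⟪s, x⟫ ≤ c) :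
    (⨆ x, expWeight K s x) / ∫ x, expWeight K s x
      ≤ Real.exp (c - ⟪s, centroid K⟫) / (volume K).toReal := by
  have hint := volume_mul_exp_inner_centroid_le_integral_expWeight hK s
  rw [div_le_div_iff₀ ((by positivity : (0 : ℝ) < _).trans_le hint) hvol, Real.exp_sub,
    div_mul_eq_mul_div, le_div_iff₀ (Real.exp_pos _), mul_assoc]
  exact mul_le_mul (iSup_expWeight_le hc) hint (by positivity) (Real.exp_pos c).le

theorem isotropic_constant_pow_le_of_exp_reweighting_general
    {n : ℕ} (K : Set (Euc n)) (hK : IsConvexBody K)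
    (ε : ℝ) (s : Euc n)
    (hsup : ∀ x ∈ K, ⟪s, x⟫ ≤ ε * n)
    (hcent : |⟪s, centroid K⟫| ≤ ε) :
    isotropicConstant (expWeight K s) ^ (2 * n) ≤
      Real.exp (2 * ((n : ℝ) + 1) * ε) / (volume K).toReal ^ 2 *
        (funCov (expWeight K s)).det := by
  have hvol := hK.volume_toReal_pos
  rcases eq_or_ne n 0 with rfl | hn
  · have hv := volume_toReal_le_one_of_dim_zero K
    have hexp : 1 ≤ Real.exp (2 * ε) := Real.one_le_exp (by linarith [(abs_nonneg _).trans hcent])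
    simp only [mul_zero, pow_zero, Matrix.det_fin_zero, mul_one, CharP.cast_eq_zero, zero_add]
    rw [one_le_div (by positivity)]
    nlinarith
  have hratio : (⨆ x, expWeight K s x) / ∫ x, expWeight K s x
      ≤ Real.exp ((n + 1) * ε) / (volume K).toReal :=
    (iSup_div_integral_expWeight_le hK.2.1 hvol hsup).trans
      (by gcongr; linarith [neg_le_of_abs_le hcent])
  rw [isotropicConstant_pow_two_mul hn (expWeight_nonneg K s)]
  refine mul_le_mul_of_nonneg_right ?_ (funCov_posSemidef (expWeight_nonneg K s)).det_nonneg
  calc ((⨆ x, expWeight K s x) / ∫ x, expWeight K s x) ^ 2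
      ≤ (Real.exp ((n + 1) * ε) / (volume K).toReal) ^ 2 :=
        pow_le_pow_left₀ (iSup_div_integral_nonneg (expWeight_nonneg K s)) hratio 2
    _ = Real.exp (2 * ((n : ℝ) + 1) * ε) / (volume K).toReal ^ 2 := by
        rw [div_pow, ← Real.exp_nat_mul, Nat.cast_ofNat, mul_assoc]

theorem isotropic_constant_pow_le_of_exp_reweighting
    {n : ℕ} (K : Set (Euc n)) (hK : IsConvexBody K)
    (ε : ℝ) (hε : 0 < ε) (s : Euc n)
    (hsup : ∀ x ∈ K, ⟪s, x⟫ ≤ ε * n)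
    (hcent : |⟪s, centroid K⟫| ≤ ε) :
    isotropicConstant (expWeight K s) ^ (2 * n) ≤
      Real.exp (2 * ((n : ℝ) + 1) * ε) / (volume K).toReal ^ 2 *
        (funCov (expWeight K s)).det :=
  isotropic_constant_pow_le_of_exp_reweighting_general K hK ε s hsup hcent

end
end

section
/- Let K ⊆ ℝ^n be a convex body with 0 in its interior, let γ ≥ 1 satisfy vol(K ∩ -K) ≥ γ^{-n} · vol(K), let L ⊆ ℝ^n be a full-rank lattice, and let d > 0. Then for every x ∈ ℝ^n, the set (x + dK) ∩ L is finite of cardinality at most (γ·(1 + 2d/λ₁(K,L)))^n; in particular G(dK,L) ≤ (γ·(1 + 2d/λ₁(K,L)))^n. -/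
open MeasureTheory Pointwise
open scoped ENNReal

noncomputable section

/-- `λ₁(K, S)`: the infimum of the gauge (Minkowski functional) of `K`
over the nonzero points of `S`. -/
def lambdaOne {n : ℕ} (K : Set (Euc n)) (S : Set (Euc n)) : ℝ :=
  sInf (gauge K '' (S \ {0}))

/-- `G(K,L)`: the maximal number of lattice points in a translate of `K`. -/
def latticeG {n : ℕ} (K : Set (Euc n)) (L : Set (Euc n)) : ℕ∞ :=
  ⨆ x : Euc n, ((x +ᵥ K) ∩ L).encard

/-
Let `l = λ₁(K, L)` and `C = K ∩ -K`. For distinct lattice points `y₁, y₂` the difference `y₁ - y₂`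
is a nonzero lattice point, so `‖y₁ - y₂‖_K ≥ l`; since `C` is symmetric and convex, this makes the
open sets `y + (l/2) • int C` pairwise disjoint. When `y` runs over `(x + dK) ∩ L` they all lie in
`x + (d + l/2) K`, so comparing volumes gives
`#((x + dK) ∩ L) · (l/2)ⁿ vol C ≤ (d + l/2)ⁿ vol K`, and `vol C ≥ γ⁻ⁿ vol K` yields the bound.
If `L = {0}`, then `λ₁` is the junk value `sInf ∅ = 0`, and the bound `γⁿ ≥ 1` is trivial.
-/

open Bornology

lemma neg_interior_inter_neg {G : Type*} [TopologicalSpace G] [InvolutiveNeg G] [ContinuousNeg G]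
    (s : Set G) : -interior (s ∩ -s) = interior (s ∩ -s) := by
  have hsymm : -(s ∩ -s) = s ∩ -s := by rw [Set.inter_neg, neg_neg, Set.inter_comm]
  have h := (Homeomorph.neg G).image_interior (s ∩ -s)
  rwa [Homeomorph.coe_neg, Set.image_neg_eq_neg, Set.image_neg_eq_neg, hsymm] at h

lemma AddSubgroup.exists_pos_le_norm_of_discreteTopology {E : Type*} [SeminormedAddCommGroup E]
    (L : AddSubgroup E) [DiscreteTopology L] : ∃ ε > 0, ∀ y ∈ L, y ≠ 0 → ε ≤ ‖y‖ := by
  obtain ⟨ε, hε, hball⟩ := Metric.isOpen_singleton_iff.mp (isOpen_discrete {(0 : L)})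
  refine ⟨ε, hε, fun y hy hy0 ↦ not_lt.mp fun hlt ↦ hy0 ?_⟩
  simpa using hball ⟨y, hy⟩ (by simpa [dist_eq_norm] using hlt)

lemma card_mul_measure_le_of_pairwiseDisjoint_vadd_s15 {G : Type*} [AddGroup G] [MeasurableSpace G]
    [MeasurableAdd G] (μ : Measure G) [μ.IsAddLeftInvariant] (F : Finset G) {A B : Set G}
    (hA : MeasurableSet A) (hdisj : (F : Set G).PairwiseDisjoint (· +ᵥ A))
    (hsub : ∀ y ∈ F, y +ᵥ A ⊆ B) : F.card * μ A ≤ μ B :=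
  calc F.card * μ A = ∑ y ∈ F, μ (y +ᵥ A) := by simp [measure_vadd]
    _ = μ (⋃ y ∈ F, y +ᵥ A) :=
      (measure_biUnion_finset hdisj fun y _ ↦ hA.const_vadd y).symm
    _ ≤ μ B := measure_mono (Set.iUnion₂_subset hsub)

section Packing

variable {E : Type*} [AddCommGroup E] [Module ℝ E] [TopologicalSpace E] [IsTopologicalAddGroup E]
  [ContinuousSMul ℝ E] {K : Set E}

lemma gauge_sub_lt_two_of_mem_interior_inter_neg (hK : Convex ℝ K) {u v : E}
    (hu : u ∈ interior (K ∩ -K)) (hv : v ∈ interior (K ∩ -K)) : gauge K (u - v) < 2 := by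
  have hv' : -v ∈ interior (K ∩ -K) := by
    rw [← neg_interior_inter_neg]
    simpa using hv
  have hmid : (1 / 2 : ℝ) • u + (1 / 2 : ℝ) • -v ∈ interior K :=
    interior_mono Set.inter_subset_left <|
      (hK.inter hK.neg).interior hu hv' (by norm_num) (by norm_num) (by norm_num)
  have hlt : gauge K ((1 / 2 : ℝ) • u + (1 / 2 : ℝ) • -v) < 1 := interior_subset_gauge_lt_one K hmid
  have hsub : u - v = (2 : ℝ) • ((1 / 2 : ℝ) • u + (1 / 2 : ℝ) • -v) := by module
  rw [hsub, gauge_smul_of_nonneg zero_le_two, smul_eq_mul]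
  linarith

lemma pairwiseDisjoint_vadd_smul_interior_inter_neg (hK : Convex ℝ K) {S : Set E}
    {l : ℝ} (hl : 0 < l) (hS : ∀ y₁ ∈ S, ∀ y₂ ∈ S, y₁ ≠ y₂ → l ≤ gauge K (y₁ - y₂)) :
    S.PairwiseDisjoint (· +ᵥ (l / 2) • interior (K ∩ -K)) := by
  intro y₁ hy₁ y₂ hy₂ hne
  refine Set.disjoint_left.mpr ?_
  rintro _ ⟨_, ⟨u, hu, rfl⟩, rfl⟩ ⟨_, ⟨v, hv, rfl⟩, hyv⟩
  simp only [vadd_eq_add] at hyv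
  have hdiff : y₁ - y₂ = (l / 2) • (v - u) := by linear_combination (norm := module) -hyv
  have hlt : gauge K (y₁ - y₂) < l :=
    calc gauge K (y₁ - y₂) = l / 2 * gauge K (v - u) := by
          rw [hdiff, gauge_smul_of_nonneg (by positivity), smul_eq_mul]
      _ < l / 2 * 2 := by
          gcongr; exact gauge_sub_lt_two_of_mem_interior_inter_neg hK hv hu
      _ = l := by ring
  exact (hS y₁ hy₁ y₂ hy₂ hne).not_gt hlt

end Packing

lemma card_mul_measure_inter_neg_le {E : Type*} [NormedAddCommGroup E] [NormedSpace ℝ E]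
    [MeasurableSpace E] [BorelSpace E] [FiniteDimensional ℝ E] (μ : Measure E)
    [μ.IsAddHaarMeasure] {K : Set E} (hK : Convex ℝ K) {d l : ℝ} (hd : 0 ≤ d) (hl : 0 < l)
    (x : E) (F : Finset E) (hFK : ∀ y ∈ F, y ∈ x +ᵥ d • K)
    (hF : ∀ y₁ ∈ F, ∀ y₂ ∈ F, y₁ ≠ y₂ → l ≤ gauge K (y₁ - y₂)) :
    F.card * (ENNReal.ofReal ((l / 2) ^ Module.finrank ℝ E) * μ (K ∩ -K)) ≤
      ENNReal.ofReal ((d + l / 2) ^ Module.finrank ℝ E) * μ K := by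
  have hl2 : 0 ≤ l / 2 := by positivity
  have hsub : ∀ y ∈ F, y +ᵥ (l / 2) • interior (K ∩ -K) ⊆ x +ᵥ (d + l / 2) • K := by
    rintro y hy _ ⟨_, ⟨u, hu, rfl⟩, rfl⟩
    obtain ⟨_, ⟨k, hk, rfl⟩, rfl⟩ := hFK y hy
    have hu : u ∈ K := (interior_subset hu).1
    refine ⟨d • k + (l / 2) • u, ?_, by simp only [vadd_eq_add, add_assoc]⟩
    rw [hK.add_smul hd hl2]
    exact Set.add_mem_add (Set.smul_mem_smul_set hk) (Set.smul_mem_smul_set hu)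
  have hmeas := ((isOpen_interior (s := K ∩ -K)).smul₀ (by positivity : l / 2 ≠ 0)).measurableSet
  have hpack := card_mul_measure_le_of_pairwiseDisjoint_vadd_s15 μ F hmeas
    (pairwiseDisjoint_vadd_smul_interior_inter_neg hK hl (by exact_mod_cast hF)) hsub
  rwa [measure_vadd, Measure.addHaar_smul_of_nonneg μ hl2,
    Measure.addHaar_smul_of_nonneg μ (by positivity : 0 ≤ d + l / 2),
    measure_interior_of_null_frontier ((hK.inter hK.neg).addHaar_frontier μ)] at hpack

section LambdaOne

variable {n : ℕ} {K S : Set (Euc n)}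

lemma lambdaOne_nonneg : 0 ≤ lambdaOne K S :=
  Real.sInf_nonneg (by rintro _ ⟨y, _, rfl⟩; exact gauge_nonneg y)

lemma lambdaOne_le_gauge {y : Euc n} (hy : y ∈ S) (hy0 : y ≠ 0) : lambdaOne K S ≤ gauge K y :=
  csInf_le ⟨0, by rintro _ ⟨z, _, rfl⟩; exact gauge_nonneg z⟩ ⟨y, ⟨hy, hy0⟩, rfl⟩

lemma lambdaOne_pos (hK : IsBounded K) (h0K : (0 : Euc n) ∈ interior K)
    (L : AddSubgroup (Euc n)) [DiscreteTopology L] (hL : ∃ y ∈ L, y ≠ 0) :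
    0 < lambdaOne K L := by
  obtain ⟨ε, hε, hεL⟩ := L.exists_pos_le_norm_of_discreteTopology
  obtain ⟨R, hR, hKR⟩ := hK.subset_ball_lt 0 0
  have habs : Absorbent ℝ K := absorbent_nhds_zero (mem_interior_iff_mem_nhds.mp h0K)
  have hgauge : ∀ y ∈ (L : Set (Euc n)) \ {0}, ε / R ≤ gauge K y := fun y ⟨hy, hy0⟩ ↦
    calc ε / R ≤ ‖y‖ / R := by gcongr; exact hεL y hy hy0
      _ = gauge (Metric.ball 0 R) y := (gauge_ball hR.le y).symm
      _ ≤ gauge K y := gauge_mono habs hKR y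
  obtain ⟨y, hy, hy0⟩ := hL
  exact (div_pos hε hR).trans_le <|
    le_csInf ⟨_, y, ⟨hy, hy0⟩, rfl⟩ (by rintro _ ⟨z, hz, rfl⟩; exact hgauge z hz)

end LambdaOne

lemma encard_vadd_smul_inter_le {n : ℕ} {K : Set (Euc n)} (hKconv : Convex ℝ K)
    (hKcomp : IsCompact K) (h0K : (0 : Euc n) ∈ interior K) {γ : ℝ} (hγ : 0 < γ)
    (hsym : ENNReal.ofReal (γ⁻¹ ^ n) * volume K ≤ volume (K ∩ -K))
    (L : AddSubgroup (Euc n)) [DiscreteTopology L] (hL : ∃ y ∈ L, y ≠ 0) {d : ℝ} (hd : 0 ≤ d)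
    (x : Euc n) :
    (((x +ᵥ d • K) ∩ (L : Set (Euc n))).encard : ℝ≥0∞) ≤
      ENNReal.ofReal ((γ * (1 + 2 * d / lambdaOne K L)) ^ n) := by
  set l := lambdaOne K L
  have hl : 0 < l := lambdaOne_pos hKcomp.isBounded h0K L hL
  have hfin : ((x +ᵥ d • K) ∩ (L : Set (Euc n))).Finite :=
    Metric.finite_isBounded_inter_isClosed DiscreteTopology.isDiscrete
      ((hKcomp.smul d).vadd x).isBounded AddSubgroup.isClosed_of_discrete
  set F := hfin.toFinset
  have hpack := card_mul_measure_inter_neg_le volume hKconv hd hl x F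
    (fun y hy ↦ (hfin.mem_toFinset.mp hy).1) fun y₁ hy₁ y₂ hy₂ hne ↦
      lambdaOne_le_gauge (sub_mem (hfin.mem_toFinset.mp hy₁).2 (hfin.mem_toFinset.mp hy₂).2)
        (sub_ne_zero.mpr hne)
  rw [finrank_euclideanSpace_fin] at hpack
  have hvolK : volume K ≠ 0 := (Measure.measure_pos_of_nonempty_interior _ ⟨0, h0K⟩).ne'
  have hc : 0 < (l / 2) ^ n * γ⁻¹ ^ n := by positivity
  have hcard : (F.card : ℝ≥0∞) * ENNReal.ofReal ((l / 2) ^ n * γ⁻¹ ^ n) ≤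
      ENNReal.ofReal ((d + l / 2) ^ n) := by
    rw [← ENNReal.mul_le_mul_iff_left hvolK hKcomp.measure_lt_top.ne]
    calc _ = F.card * (ENNReal.ofReal ((l / 2) ^ n) * (ENNReal.ofReal (γ⁻¹ ^ n) * volume K)) := by
          rw [ENNReal.ofReal_mul (by positivity)]; ring
      _ ≤ _ := le_trans (by gcongr) hpack
  have hratio : (d + l / 2) ^ n / ((l / 2) ^ n * γ⁻¹ ^ n) = (γ * (1 + 2 * d / l)) ^ n := by
    rw [← mul_pow, ← div_pow]
    congr 1
    field_simp
    ring
  rw [hfin.encard_eq_coe_toFinset_card, ← hratio, ENNReal.ofReal_div_of_pos hc,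
    ENNReal.le_div_iff_mul_le (.inl (ENNReal.ofReal_pos.mpr hc).ne') (.inl ENNReal.ofReal_ne_top)]
  simpa using hcard

theorem lattice_points_in_translate_le_general
    {n : ℕ} (K : Set (Euc n)) (hK : IsConvexBody K)
    (h0K : (0 : Euc n) ∈ interior K)
    (γ : ℝ) (hγ : 1 ≤ γ)
    (hsym : ENNReal.ofReal (γ⁻¹ ^ n) * volume K ≤ volume (K ∩ -K))
    (L : AddSubgroup (Euc n)) (hdisc : DiscreteTopology L)
    (d : ℝ) (hd : 0 < d) :
    (∀ x : Euc n, (((x +ᵥ d • K) ∩ (L : Set (Euc n))).encard : ℝ≥0∞) ≤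
        ENNReal.ofReal ((γ * (1 + 2 * d / lambdaOne K L)) ^ n)) ∧
      (latticeG (d • K) (L : Set (Euc n)) : ℝ≥0∞) ≤
        ENNReal.ofReal ((γ * (1 + 2 * d / lambdaOne K L)) ^ n) := by
  obtain ⟨hKconv, hKcomp, -⟩ := hK
  have hcount : ∀ x : Euc n, (((x +ᵥ d • K) ∩ (L : Set (Euc n))).encard : ℝ≥0∞) ≤
      ENNReal.ofReal ((γ * (1 + 2 * d / lambdaOne K L)) ^ n) := by
    intro x
    by_cases hL : ∃ y ∈ L, y ≠ 0
    · exact encard_vadd_smul_inter_le hKconv hKcomp h0K (by positivity) hsym L hL hd.le x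
    · have hsub : (x +ᵥ d • K) ∩ (L : Set (Euc n)) ⊆ {0} := fun y hy ↦ by
        by_contra hy0
        exact hL ⟨y, hy.2, hy0⟩
      have hbase : 1 ≤ γ * (1 + 2 * d / lambdaOne K L) := by
        have : 0 ≤ 2 * d / lambdaOne K L := div_nonneg (by positivity) lambdaOne_nonneg
        nlinarith
      calc _ ≤ ((1 : ℕ∞) : ℝ≥0∞) := by
            gcongr; simpa using Set.encard_le_encard hsub
        _ = ENNReal.ofReal 1 := by simp
        _ ≤ _ := ENNReal.ofReal_le_ofReal (one_le_pow₀ hbase)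
  refine ⟨hcount, ?_⟩
  rw [latticeG, ENat.toENNReal_iSup]
  exact iSup_le hcount

theorem lattice_points_in_translate_le
    {n : ℕ} (K : Set (Euc n)) (hK : IsConvexBody K)
    (h0K : (0 : Euc n) ∈ interior K)
    (γ : ℝ) (hγ : 1 ≤ γ)
    (hsym : ENNReal.ofReal (γ⁻¹ ^ n) * volume K ≤ volume (K ∩ -K))
    (L : AddSubgroup (Euc n)) (hdisc : DiscreteTopology L)
    (hfull : Submodule.span ℝ (L : Set (Euc n)) = ⊤)
    (d : ℝ) (hd : 0 < d) :
    (∀ x : Euc n, (((x +ᵥ d • K) ∩ (L : Set (Euc n))).encard : ℝ≥0∞) ≤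
        ENNReal.ofReal ((γ * (1 + 2 * d / lambdaOne K L)) ^ n)) ∧
      (latticeG (d • K) (L : Set (Euc n)) : ℝ≥0∞) ≤
        ENNReal.ofReal ((γ * (1 + 2 * d / lambdaOne K L)) ^ n) :=
  lattice_points_in_translate_le_general K hK h0K γ hγ hsym L hdisc d hd

end
end

section
/- Let K ⊆ ℝ^n be a convex body, let L ⊆ ℝ^n be a full-rank lattice, and let t > 0. Then G(tK, L) ≤ (4t + 2)^n · G(K, L). -/
/-! Pick `x ∈ K` for which the centrally symmetric body `C = (K - x) ∩ (x - K)` has volume at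
least `2⁻ⁿ vol K`: it exists because `vol (K ∩ (2y - K))` vanishes off `K` and has integral
`2⁻ⁿ (vol K)²` (Fubini), so its mean over `K` is `2⁻ⁿ vol K`. After translating, `x = 0`.
Inside a translate of `tK`, a set of points whose differences avoid `C` has pairwise disjoint
translates of `C / 2`, all inside a translate of `(t + 1/2) K`, so it has at most
`(t + 1/2)ⁿ vol K / (2⁻ⁿ vol C) ≤ (4t + 2)ⁿ` elements. A maximal such set of lattice points
therefore has at most that many elements, and the translates of `C ⊆ K` at its points cover
all lattice points of the translate, each containing at most `G(K, L)` of them. -/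

open MeasureTheory Pointwise
open scoped ENNReal

noncomputable section

open Module Finset

theorem Convex.mem_of_mem_of_two_smul_sub_mem {E : Type*} [AddCommGroup E] [Module ℝ E]
    {K : Set E} (hK : Convex ℝ K) {x y : E} (hy : y ∈ K)
    (hy' : (2 : ℝ) • x - y ∈ K) : x ∈ K := by
  convert hK.midpoint_mem hy hy' using 1
  rw [midpoint_eq_smul_add, invOf_eq_inv]
  module

section AddHaar

variable {E : Type*} [NormedAddCommGroup E] [NormedSpace ℝ E] [MeasurableSpace E] [BorelSpace E]
  [FiniteDimensional ℝ E] (μ : Measure E) [μ.IsAddHaarMeasure] {K : Set E}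

theorem lintegral_measure_inter_two_smul_sub (hKm : MeasurableSet K) :
    ∫⁻ x, μ {y | y ∈ K ∧ (2 : ℝ) • x - y ∈ K} ∂μ =
      ENNReal.ofReal ((2 ^ finrank ℝ E)⁻¹) * μ K * μ K := by
  set A : Set (E × E) := {p | p.2 ∈ K ∧ (2 : ℝ) • p.1 - p.2 ∈ K}
  have hA : MeasurableSet A :=
    (measurable_snd hKm).inter (((measurable_fst.const_smul (2 : ℝ)).sub measurable_snd) hKm)
  have hslice (y : E) : μ ((fun x => (x, y)) ⁻¹' A) =
      K.indicator (fun _ => ENNReal.ofReal ((2 ^ finrank ℝ E)⁻¹) * μ K) y := by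
    by_cases hy : y ∈ K
    · have hpre : (fun x => (x, y)) ⁻¹' A = ((2 : ℝ) • ·) ⁻¹' ((· + -y) ⁻¹' K) := by
        ext x; simp [A, hy, sub_eq_add_neg]
      rw [hpre, Measure.addHaar_preimage_smul μ two_ne_zero, measure_preimage_add_right,
        Set.indicator_of_mem hy, abs_of_pos (by positivity)]
    · have hpre : (fun x => (x, y)) ⁻¹' A = ∅ := by ext x; simp [A, hy]
      rw [hpre, measure_empty, Set.indicator_of_notMem hy]
  calc ∫⁻ x, μ {y | y ∈ K ∧ (2 : ℝ) • x - y ∈ K} ∂μ = μ.prod μ A := (Measure.prod_apply hA).symm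
    _ = ∫⁻ y, K.indicator (fun _ => ENNReal.ofReal ((2 ^ finrank ℝ E)⁻¹) * μ K) y ∂μ := by
      rw [Measure.prod_apply_symm hA]
      simp_rw [hslice]
    _ = _ := by rw [lintegral_indicator hKm, setLIntegral_const]

theorem Convex.exists_measure_inter_neg_ge (hK : Convex ℝ K) (hKm : MeasurableSet K)
    (hK0 : μ K ≠ 0) (hKtop : μ K ≠ ∞) :
    ∃ x ∈ K, ENNReal.ofReal ((2 ^ finrank ℝ E)⁻¹) * μ K ≤ μ ((-x +ᵥ K) ∩ -(-x +ᵥ K)) := by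
  set f : E → ℝ≥0∞ := fun x => μ {y | y ∈ K ∧ (2 : ℝ) • x - y ∈ K}
  have hsupp : f.support ⊆ K := fun x hx =>
    let ⟨_, hy, hy'⟩ := nonempty_of_measure_ne_zero hx
    hK.mem_of_mem_of_two_smul_sub_mem hy hy'
  have hint : ∫⁻ x in K, f x ∂μ = ENNReal.ofReal ((2 ^ finrank ℝ E)⁻¹) * μ K * μ K := by
    rw [setLIntegral_eq_of_support_subset hsupp, lintegral_measure_inter_two_smul_sub μ hKm]
  obtain ⟨x, hxK, hx⟩ := exists_setLAverage_le hK0 hKm.nullMeasurableSet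
    (by rw [hint]; exact ENNReal.mul_ne_top (ENNReal.mul_ne_top ENNReal.ofReal_ne_top hKtop) hKtop)
  rw [setLAverage_eq, hint, ENNReal.mul_div_cancel_right hK0 hKtop] at hx
  have hfx : f x = μ ((-x +ᵥ K) ∩ -(-x +ᵥ K)) := by
    rw [← measure_vadd μ x ((-x +ᵥ K) ∩ -(-x +ᵥ K))]
    refine congrArg μ (Set.ext fun y => ?_)
    simp only [Set.mem_ofPred_eq, Set.mem_vadd_set_iff_neg_vadd_mem, Set.mem_inter_iff,
      Set.mem_neg, vadd_eq_add]
    rw [show - -x + (-x + y) = y by abel, show - -x + -(-x + y) = (2 : ℝ) • x - y by module]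
  exact ⟨x, hxK, hfx ▸ hx⟩

theorem card_mul_measure_le_of_pairwise_sub_notMem {A C : Set E} (hC : Convex ℝ C)
    (hneg : ∀ z ∈ C, -z ∈ C) (hCm : MeasurableSet C) {T : Finset E} (hTA : ↑T ⊆ A)
    (hT : (T : Set E).Pairwise fun a b => a - b ∉ C) :
    #T * μ ((2⁻¹ : ℝ) • C) ≤ μ (A + (2⁻¹ : ℝ) • C) := by
  have hdisj : (T : Set E).PairwiseDisjoint fun s => s +ᵥ (2⁻¹ : ℝ) • C := by
    intro a ha b hb hab
    refine Set.disjoint_left.2 ?_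
    rintro _ ⟨_, ⟨c, hc, rfl⟩, rfl⟩ ⟨_, ⟨c', hc', rfl⟩, he⟩
    apply hT ha hb hab
    convert hC hc' (hneg c hc) (by norm_num : (0 : ℝ) ≤ 2⁻¹) (by norm_num : (0 : ℝ) ≤ 2⁻¹)
      (by norm_num) using 1
    simp only [vadd_eq_add] at he
    linear_combination (norm := module) -he
  calc #T * μ ((2⁻¹ : ℝ) • C) = ∑ s ∈ T, μ (s +ᵥ (2⁻¹ : ℝ) • C) := by simp [measure_vadd]
    _ = μ (⋃ s ∈ T, s +ᵥ (2⁻¹ : ℝ) • C) :=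
      (measure_biUnion_finset hdisj fun s _ => (hCm.const_smul₀ _).const_vadd s).symm
    _ ≤ μ (A + (2⁻¹ : ℝ) • C) :=
      measure_mono (Set.iUnion₂_subset fun _ hs => Set.vadd_set_subset_add (hTA hs))

theorem card_le_of_pairwise_sub_notMem_inter_neg (hK : Convex ℝ K) (hKm : MeasurableSet K)
    (hK0 : μ K ≠ 0) (hKtop : μ K ≠ ∞)
    (hsymm : ENNReal.ofReal ((2 ^ finrank ℝ E)⁻¹) * μ K ≤ μ (K ∩ -K)) {t : ℝ} (ht : 0 ≤ t)
    (x : E) {T : Finset E} (hTA : ↑T ⊆ x +ᵥ t • K)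
    (hT : (T : Set E).Pairwise fun a b => a - b ∉ K ∩ -K) :
    (#T : ℝ) ≤ (4 * t + 2) ^ finrank ℝ E := by
  set n := finrank ℝ E
  have hpack := card_mul_measure_le_of_pairwise_sub_notMem μ (hK.inter hK.neg)
    (fun z hz => ⟨hz.2, by simpa using hz.1⟩) (hKm.inter hKm.neg) hTA hT
  have hsub : (x +ᵥ t • K) + (2⁻¹ : ℝ) • (K ∩ -K) ⊆ x +ᵥ (t + 2⁻¹) • K := by
    rw [hK.add_smul ht (by norm_num), vadd_add_assoc]
    gcongr
    exact Set.inter_subset_left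
  have hvol : #T * (ENNReal.ofReal ((2 ^ n)⁻¹ * (2 ^ n)⁻¹) * μ K) ≤
      ENNReal.ofReal ((t + 2⁻¹) ^ n) * μ K := by
    calc #T * (ENNReal.ofReal ((2 ^ n)⁻¹ * (2 ^ n)⁻¹) * μ K)
        ≤ #T * μ ((2⁻¹ : ℝ) • (K ∩ -K)) := by
          rw [Measure.addHaar_smul_of_nonneg μ (by norm_num), inv_pow,
            ENNReal.ofReal_mul (by positivity), mul_assoc]
          gcongr
      _ ≤ μ (x +ᵥ (t + 2⁻¹) • K) := hpack.trans (measure_mono hsub)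
      _ = ENNReal.ofReal ((t + 2⁻¹) ^ n) * μ K := by
          rw [measure_vadd, Measure.addHaar_smul_of_nonneg μ (by positivity)]
  rw [← mul_assoc, ENNReal.mul_le_mul_iff_left hK0 hKtop, ← ENNReal.ofReal_natCast,
    ← ENNReal.ofReal_mul (by positivity), ENNReal.ofReal_le_ofReal_iff (by positivity)] at hvol
  calc (#T : ℝ) = #T * ((2 ^ n)⁻¹ * (2 ^ n)⁻¹) * (2 ^ n * 2 ^ n) := by field_simp
    _ ≤ (t + 2⁻¹) ^ n * (2 ^ n * 2 ^ n) := by gcongr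
    _ = (4 * t + 2) ^ n := by rw [← mul_pow, ← mul_pow]; congr 1; ring

end AddHaar

theorem exists_finset_forall_exists_rel_of_card_le {α : Type*} {r : α → α → Prop}
    (hrefl : ∀ a, r a a) (hsymm : ∀ a b, r a b → r b a) {S : Set α} {M : ℕ}
    (hM : ∀ T : Finset α, ↑T ⊆ S → (T : Set α).Pairwise (fun a b => ¬ r a b) → #T ≤ M) :
    ∃ T : Finset α, ↑T ⊆ S ∧ #T ≤ M ∧ ∀ s ∈ S, ∃ t ∈ T, r s t := by
  classical
  by_contra! hnot
  have hgrow (k : ℕ) :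
      ∃ T : Finset α, ↑T ⊆ S ∧ (T : Set α).Pairwise (fun a b => ¬ r a b) ∧ #T = k := by
    induction k with
    | zero => exact ⟨∅, by simp, by simp, rfl⟩
    | succ k ih =>
      obtain ⟨T, hTS, hT, rfl⟩ := ih
      obtain ⟨s, hs, hsT⟩ := hnot T hTS (hM T hTS hT)
      refine ⟨insert s T, ?_, ?_, card_insert_of_notMem fun h => hsT s h (hrefl s)⟩
      · rw [coe_insert]
        exact Set.insert_subset hs hTS
      · rw [coe_insert, Set.pairwise_insert]
        exact ⟨hT, fun t ht _ => ⟨hsT t ht, fun h => hsT t ht (hsymm _ _ h)⟩⟩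
  obtain ⟨T, hTS, hT, hcard⟩ := hgrow (M + 1)
  have := hM T hTS hT
  omega

theorem latticeG_vadd {n : ℕ} (v : Euc n) (K L : Set (Euc n)) :
    latticeG (v +ᵥ K) L = latticeG K L := by
  simp only [latticeG, vadd_vadd]
  exact (Equiv.addRight v).iSup_comp (g := fun y => ((y +ᵥ K) ∩ L).encard)

theorem encard_inter_le_card_mul_latticeG {n : ℕ} {S K : Set (Euc n)} (L : Set (Euc n))
    {T : Finset (Euc n)} (hS : S ⊆ ⋃ s ∈ T, s +ᵥ K) :
    (S ∩ L).encard ≤ #T * latticeG K L :=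
  calc (S ∩ L).encard ≤ (⋃ s ∈ T, (s +ᵥ K) ∩ L).encard := by
        rw [← Set.iUnion₂_inter]
        exact Set.encard_le_encard (Set.inter_subset_inter_left L hS)
    _ ≤ ∑ s ∈ T, ((s +ᵥ K) ∩ L).encard := T.set_encard_biUnion_le _
    _ ≤ ∑ _s ∈ T, latticeG K L := sum_le_sum fun s _ => le_iSup (fun y => ((y +ᵥ K) ∩ L).encard) s
    _ = #T * latticeG K L := by rw [sum_const, nsmul_eq_mul]

theorem latticeG_smul_le_of_measure_inter_neg {n : ℕ} {K : Set (Euc n)} (hK : Convex ℝ K)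
    (hKm : MeasurableSet K) (hK0 : volume K ≠ 0) (hKtop : volume K ≠ ∞) (h0 : (0 : Euc n) ∈ K)
    (hsymm : ENNReal.ofReal ((2 ^ n)⁻¹) * volume K ≤ volume (K ∩ -K)) (L : Set (Euc n))
    {t : ℝ} (ht : 0 ≤ t) :
    latticeG (t • K) L ≤ ⌊(4 * t + 2) ^ n⌋₊ * latticeG K L := by
  refine iSup_le fun x => ?_
  obtain ⟨T, hTS, hTcard, hcover⟩ := exists_finset_forall_exists_rel_of_card_le
    (r := fun a b => a - b ∈ K ∩ -K) (S := x +ᵥ t • K)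
    (fun a => by simpa [sub_self] using h0)
    (fun a b h => by rw [← neg_sub]; exact ⟨h.2, by simpa using h.1⟩)
    (fun T hTS hT => Nat.le_floor <| by
      simpa only [finrank_euclideanSpace_fin] using card_le_of_pairwise_sub_notMem_inter_neg volume
        hK hKm hK0 hKtop (by rwa [finrank_euclideanSpace_fin]) ht x hTS hT)
  calc ((x +ᵥ t • K) ∩ L).encard ≤ #T * latticeG K L :=
        encard_inter_le_card_mul_latticeG L fun s hs => by
          obtain ⟨a, ha, hsa⟩ := hcover s hs
          exact Set.mem_biUnion ha ⟨s - a, hsa.1, by simp⟩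
    _ ≤ _ := by gcongr

theorem latticeG_smul_le_general
    {n : ℕ} (K : Set (Euc n)) (hK : IsConvexBody K)
    (L : AddSubgroup (Euc n))
    (t : ℝ) (ht : 0 < t) :
    (latticeG (t • K) (L : Set (Euc n)) : ℝ≥0∞) ≤
      ENNReal.ofReal ((4 * t + 2) ^ n) * (latticeG K (L : Set (Euc n)) : ℝ≥0∞) := by
  obtain ⟨hconv, hcomp, hint⟩ := hK
  have hKm := hcomp.isClosed.measurableSet
  have hK0 := (Measure.measure_pos_of_nonempty_interior volume hint).ne'
  have hKtop := (hcomp.measure_lt_top (μ := volume)).ne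
  obtain ⟨x, hxK, hsymm⟩ := hconv.exists_measure_inter_neg_ge volume hKm hK0 hKtop
  rw [finrank_euclideanSpace_fin] at hsymm
  have key := latticeG_smul_le_of_measure_inter_neg (hconv.vadd (-x)) (hKm.const_vadd (-x))
    (by rwa [measure_vadd]) (by rwa [measure_vadd]) ⟨x, hxK, neg_add_cancel x⟩
    (by rwa [measure_vadd]) L ht.le
  have hsmul : t • (-x +ᵥ K) = t • -x +ᵥ t • K := by
    simp only [← Set.image_vadd, ← Set.image_smul, Set.image_image, vadd_eq_add, smul_add]
  rw [hsmul, latticeG_vadd, latticeG_vadd] at key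
  calc (latticeG (t • K) L : ℝ≥0∞) ≤ ⌊(4 * t + 2) ^ n⌋₊ * (latticeG K L : ℝ≥0∞) := by
        exact_mod_cast key
    _ ≤ ENNReal.ofReal ((4 * t + 2) ^ n) * (latticeG K L : ℝ≥0∞) := by
        gcongr
        rw [← ENNReal.ofReal_natCast]
        exact ENNReal.ofReal_le_ofReal (Nat.floor_le (by positivity))

theorem latticeG_smul_le
    {n : ℕ} (K : Set (Euc n)) (hK : IsConvexBody K)
    (L : AddSubgroup (Euc n)) (hdisc : DiscreteTopology L)
    (hfull : Submodule.span ℝ (L : Set (Euc n)) = ⊤)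
    (t : ℝ) (ht : 0 < t) :
    (latticeG (t • K) (L : Set (Euc n)) : ℝ≥0∞) ≤
      ENNReal.ofReal ((4 * t + 2) ^ n) * (latticeG K (L : Set (Euc n)) : ℝ≥0∞) :=
  latticeG_smul_le_general K hK L t ht

end
end

section
/- Let L ⊆ ℝ^n be a full-rank lattice and let P ⊆ ℝ^n be a compact, centrally symmetric convex set with nonempty interior that tiles ℝ^n by L, i.e. L + P = ℝ^n and for distinct x, y ∈ L the interiors of x + P and y + P are disjoint. Then for every convex body K ⊆ ℝ^n and every ε ≥ 0, the set {x ∈ L : (x + (1+ε)P) ∩ K ≠ ∅} is finite of cardinality at most vol(K + (2+ε)P) / vol(P). -/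
open MeasureTheory Pointwise
open scoped ENNReal

noncomputable section

/- Volume counting: the translates `x + interior P` of a tile meeting `K` are pairwise disjoint and
all lie in `K + (2 + ε) P`, so their number times `vol P` is at most `vol (K + (2 + ε) P)`. Measure
additivity holds for arbitrary (even uncountable) disjoint families, so finiteness of the set of
such tiles comes out of the bound rather than being needed for it. -/

theorem encard_mul_measure_le_of_pairwiseDisjoint_vadd {G : Type*} [AddGroup G]
    [MeasurableSpace G] [MeasurableAdd G] (μ : Measure G) [μ.IsAddLeftInvariant]
    {U A S : Set G} (hU : MeasurableSet U) (hdisj : S.PairwiseDisjoint (· +ᵥ U))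
    (hsub : ∀ x ∈ S, x +ᵥ U ⊆ A) :
    (S.encard : ℝ≥0∞) * μ U ≤ μ A :=
  calc (S.encard : ℝ≥0∞) * μ U = ∑' x : S, μ ((x : G) +ᵥ U) := by
        simp only [measure_vadd, ENNReal.tsum_const, Set.encard]
    _ ≤ μ (⋃ x : S, (x : G) +ᵥ U) :=
        tsum_meas_le_meas_iUnion_of_disjoint μ (fun _ ↦ hU.const_vadd _)
          fun x y hxy ↦ hdisj x.2 y.2 (Subtype.coe_ne_coe.mpr hxy)
    _ ≤ μ A := measure_mono (Set.iUnion_subset fun x ↦ hsub x x.2)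

theorem Convex.vadd_subset_add_smul_of_inter_nonempty {E : Type*} [AddCommGroup E] [Module ℝ E]
    {P K : Set E} (hP : Convex ℝ P) (hPsym : -P = P) {t : ℝ} (ht : 0 ≤ t) {x : E}
    (hx : ((x +ᵥ t • P) ∩ K).Nonempty) :
    x +ᵥ P ⊆ K + (t + 1) • P := by
  obtain ⟨_, ⟨p, hp, rfl⟩, hpK⟩ := hx
  have hx_mem : x ∈ K + t • P := by
    have hneg : -p ∈ t • P := by rw [← hPsym, Set.smul_set_neg]; exact Set.neg_mem_neg.mpr hp
    exact ⟨x +ᵥ p, hpK, -p, hneg, by simp [vadd_eq_add]⟩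
  rw [hP.add_smul ht zero_le_one, one_smul, ← add_assoc]
  rintro _ ⟨q, hq, rfl⟩
  exact Set.add_mem_add hx_mem hq

theorem tiling_intersecting_tiles_card_le_general
    {n : ℕ} (L : AddSubgroup (Euc n))
    (P : Set (Euc n)) (hPcomp : IsCompact P) (hPconv : Convex ℝ P)
    (hPint : (interior P).Nonempty) (hPsym : P = -P)
    (hdisj : ∀ x ∈ L, ∀ y ∈ L, x ≠ y →
      interior (x +ᵥ P) ∩ interior (y +ᵥ P) = ∅)
    (K : Set (Euc n)) (ε : ℝ) (hε : 0 ≤ ε) :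
    ({x : Euc n | x ∈ L ∧ ((x +ᵥ (1 + ε) • P) ∩ K).Nonempty}.encard : ℝ≥0∞) ≤
      volume (K + (2 + ε) • P) / volume P := by
  have hvol_interior : volume (interior P) = volume P :=
    measure_interior_of_null_frontier (hPconv.addHaar_frontier volume)
  have hvol_ne_zero : volume P ≠ 0 :=
    hvol_interior ▸ isOpen_interior.measure_ne_zero volume hPint
  rw [ENNReal.le_div_iff_mul_le (Or.inl hvol_ne_zero) (Or.inl hPcomp.measure_lt_top.ne),
    ← hvol_interior]
  refine encard_mul_measure_le_of_pairwiseDisjoint_vadd volume isOpen_interior.measurableSet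
    ?_ ?_
  · rintro x ⟨hxL, -⟩ y ⟨hyL, -⟩ hxy
    simpa [Function.onFun, Set.disjoint_iff_inter_eq_empty, interior_vadd] using
      hdisj x hxL y hyL hxy
  · rintro x ⟨-, hx⟩
    rw [← interior_vadd, show (2 : ℝ) + ε = 1 + ε + 1 by ring]
    exact interior_subset.trans
      (hPconv.vadd_subset_add_smul_of_inter_nonempty hPsym.symm (by linarith) hx)

theorem tiling_intersecting_tiles_card_le
    {n : ℕ} (L : AddSubgroup (Euc n)) (hdisc : DiscreteTopology L)
    (hfull : Submodule.span ℝ (L : Set (Euc n)) = ⊤)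
    (P : Set (Euc n)) (hPcomp : IsCompact P) (hPconv : Convex ℝ P)
    (hPint : (interior P).Nonempty) (hPsym : P = -P)
    (hcover : (L : Set (Euc n)) + P = Set.univ)
    (hdisj : ∀ x ∈ L, ∀ y ∈ L, x ≠ y →
      interior (x +ᵥ P) ∩ interior (y +ᵥ P) = ∅)
    (K : Set (Euc n)) (hK : IsConvexBody K) (ε : ℝ) (hε : 0 ≤ ε) :
    ({x : Euc n | x ∈ L ∧ ((x +ᵥ (1 + ε) • P) ∩ K).Nonempty}.encard : ℝ≥0∞) ≤
      volume (K + (2 + ε) • P) / volume P :=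
  tiling_intersecting_tiles_card_le_general L P hPcomp hPconv hPint hPsym hdisj K ε hε
end
end
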